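/- arXiv:math/0703110 — 3 statements merged into one kernel-verified Lean document; each statement's English description precedes it below -/
import Mathlib

section
/- Let k, n be positive integers, let P_k be a homogeneous polynomial of degree k in n variables with complex coefficients, and let M_ℝ := max_{θ ∈ S^{n-1}} |P_k(θ)|, where S^{n-1} is the unit sphere in ℝ^n. Then for every homogeneous polynomial f_m of degree m in n variables, ‖P_k f_m‖_rF ≤ M_ℝ √(I_{2m+2k+n-1}/I_{2m+n-1}) ‖f_m‖_rF. In particular, for fixed k and n there exists a constant D_{k,n} > 0 such that ‖P_k f_m‖_rF ≤ D_{k,n} M_ℝ √((1+m)^k) ‖f_m‖_rF for every m and every homogeneous polynomial f_m of degree m. -/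
open MvPolynomial MeasureTheory Filter Matrix

noncomputable section

/-- Evaluation of a complex-coefficient polynomial at a real point of `ℝⁿ`. -/
def evalR {n : ℕ} (P : MvPolynomial (Fin n) ℂ) (x : Fin n → ℝ) : ℂ :=
  MvPolynomial.eval (fun i => (x i : ℂ)) P

/-- The real Fischer inner product `⟨f,g⟩_rF = ∫_{ℝⁿ} f(x) conj (g(x)) e^{-|x|²} dx`. -/
def rFInner {n : ℕ} (f g : MvPolynomial (Fin n) ℂ) : ℂ :=
  ∫ x : Fin n → ℝ, evalR f x * (starRingEnd ℂ) (evalR g x) * Real.exp (-(∑ i, x i ^ 2))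

/-- The real Fischer norm `‖f‖_rF = ⟨f,f⟩_rF^{1/2}`. -/
def rFNorm {n : ℕ} (f : MvPolynomial (Fin n) ℂ) : ℝ :=
  Real.sqrt (∫ x : Fin n → ℝ, ‖evalR f x‖ ^ 2 * Real.exp (-(∑ i, x i ^ 2)))

/-- The (complex) Fischer inner product `⟨f,g⟩_F = ∑_α α! c_α conj(d_α)`. -/
def FInner {n : ℕ} (f g : MvPolynomial (Fin n) ℂ) : ℂ :=
  ∑ α ∈ f.support ∪ g.support,
    (∏ i, ((α i).factorial : ℂ)) * MvPolynomial.coeff α f *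
      (starRingEnd ℂ) (MvPolynomial.coeff α g)

/-- The (complex) Fischer norm. -/
def FNorm {n : ℕ} (f : MvPolynomial (Fin n) ℂ) : ℝ :=
  Real.sqrt (FInner f f).re

/-- The Laplace operator `Δ = ∑ ∂²/∂xⱼ²` on polynomials. -/
def lapP {n : ℕ} (f : MvPolynomial (Fin n) ℂ) : MvPolynomial (Fin n) ℂ :=
  ∑ i, MvPolynomial.pderiv i (MvPolynomial.pderiv i f)

/-- The differential operator `D^α = ∂^{|α|}/∂x^α` on polynomials. -/
def DP {n : ℕ} (α : Fin n → ℕ) (f : MvPolynomial (Fin n) ℂ) : MvPolynomial (Fin n) ℂ :=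
  (List.finRange n).foldl (fun g i => (fun h => MvPolynomial.pderiv i h)^[α i] g) f

/-- The constant coefficient operator `Q(D)` associated to a polynomial `Q = ∑ c_β x^β`. -/
def QD {n : ℕ} (Q f : MvPolynomial (Fin n) ℂ) : MvPolynomial (Fin n) ℂ :=
  ∑ β ∈ Q.support, MvPolynomial.coeff β Q • DP (fun i => β i) f

/-- The polynomial `|x|² = x₁² + ⋯ + xₙ²`. -/
def radSq (n : ℕ) : MvPolynomial (Fin n) ℂ :=
  ∑ i : Fin n, (MvPolynomial.X i) ^ 2

/-- `Ii m = ∫₀^∞ e^{-r²} r^m dr`. -/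
def Ii (m : ℕ) : ℝ := ∫ r in Set.Ioi (0 : ℝ), Real.exp (-r ^ 2) * r ^ m

/-- `e_{p,m} = 2^p p! (2m+n)(2m+n+2)⋯(2m+n+2(p-1))` (for `n` variables). -/
def epm (n p m : ℕ) : ℕ :=
  2 ^ p * Nat.factorial p * ∏ i ∈ Finset.range p, (2 * m + n + 2 * i)

/-- The partial derivative `∂/∂xᵢ` of a function on `ℝⁿ`. -/
def pdF {n : ℕ} (i : Fin n) (f : (Fin n → ℝ) → ℂ) : (Fin n → ℝ) → ℂ :=
  fun x => fderiv ℝ f x (Pi.single i 1)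

/-- The differential operator `D^α` on functions on `ℝⁿ`. -/
def DF {n : ℕ} (α : Fin n → ℕ) (f : (Fin n → ℝ) → ℂ) : (Fin n → ℝ) → ℂ :=
  (List.finRange n).foldl (fun g i => (pdF i)^[α i] g) f

/-- The Laplace operator `Δ` on functions on `ℝⁿ`. -/
def lapF {n : ℕ} (f : (Fin n → ℝ) → ℂ) : (Fin n → ℝ) → ℂ :=
  fun x => ∑ i, pdF i (pdF i f) x

/-- The open euclidean ball `B_R = {x ∈ ℝⁿ : |x| < R}`. -/
def euclBall (n : ℕ) (R : ℝ) : Set (Fin n → ℝ) := {x | ∑ i, x i ^ 2 < R ^ 2}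

/-- The homogeneous part of degree `m` of the Taylor series of `f` at `0`:
`f_m(x) = ∑_{|α|=m} (1/α!) (∂^α f)(0) x^α`. -/
def homPart {n : ℕ} (f : (Fin n → ℝ) → ℂ) (m : ℕ) (x : Fin n → ℝ) : ℂ :=
  ∑ α ∈ Finset.Nat.antidiagonalTuple n m,
    (∏ i, ((α i).factorial : ℂ))⁻¹ * DF α f 0 * ∏ i, (x i : ℂ) ^ (α i)

/-- Membership in `A(B_R)`: infinitely differentiable on `B_R`, and the homogeneous Taylor
series converges absolutely and uniformly to `f` on every compact subset of `B_R`. -/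
def MemA (n : ℕ) (R : ℝ) (f : (Fin n → ℝ) → ℂ) : Prop :=
  ContDiffOn ℝ ⊤ f (euclBall n R) ∧
  ∀ K : Set (Fin n → ℝ), K ⊆ euclBall n R → IsCompact K →
    TendstoUniformlyOn (fun N x => ∑ m ∈ Finset.range N, homPart f m x) f atTop K ∧
    ∃ g : (Fin n → ℝ) → ℝ,
      TendstoUniformlyOn (fun N x => ∑ m ∈ Finset.range N, ‖homPart f m x‖)
        g atTop K

/-- The operator `Q(D)` on functions on `ℝⁿ`. -/
def QDF {n : ℕ} (Q : MvPolynomial (Fin n) ℂ) (u : (Fin n → ℝ) → ℂ) : (Fin n → ℝ) → ℂ :=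
  fun x => ∑ β ∈ Q.support, MvPolynomial.coeff β Q * DF (fun i => β i) u x

/-- The operator `L = Δ^p + ∑_{|α| ≤ k₀} a_α(x) D^α` on functions on `ℝⁿ`. -/
def Lop {n : ℕ} (p k₀ : ℕ) (a : (Fin n → ℕ) → (Fin n → ℝ) → ℂ)
    (u : (Fin n → ℝ) → ℂ) : (Fin n → ℝ) → ℂ :=
  fun x => (lapF^[p] u) x +
    ∑ l ∈ Finset.range (k₀ + 1), ∑ α ∈ Finset.Nat.antidiagonalTuple n l, a α x * DF α u x

/-- The operator `L = Q(D) + ∑_{|α| ≤ k₀} a_α(x) D^α` on functions on `ℝⁿ`. -/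
def LopQ {n : ℕ} (Q : MvPolynomial (Fin n) ℂ) (k₀ : ℕ) (a : (Fin n → ℕ) → (Fin n → ℝ) → ℂ)
    (u : (Fin n → ℝ) → ℂ) : (Fin n → ℝ) → ℂ :=
  fun x => QDF Q u x +
    ∑ l ∈ Finset.range (k₀ + 1), ∑ α ∈ Finset.Nat.antidiagonalTuple n l, a α x * DF α u x

/-- The complex partial derivative `∂/∂zᵢ` of a function on `ℂⁿ`. -/
def pdC {n : ℕ} (i : Fin n) (f : (Fin n → ℂ) → ℂ) : (Fin n → ℂ) → ℂ :=
  fun z => fderiv ℂ f z (Pi.single i 1)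

/-- The differential operator `D^α` on functions on `ℂⁿ`. -/
def DFc {n : ℕ} (α : Fin n → ℕ) (f : (Fin n → ℂ) → ℂ) : (Fin n → ℂ) → ℂ :=
  (List.finRange n).foldl (fun g i => (pdC i)^[α i] g) f

/-- The operator `B(D) = ∑_{i,j} B_{ij} ∂_i ∂_j` on functions on `ℂⁿ`, for the quadratic
form `B(ζ) = ζᵗBζ`. -/
def BDop {n : ℕ} (B : Matrix (Fin n) (Fin n) ℂ) (f : (Fin n → ℂ) → ℂ) :
    (Fin n → ℂ) → ℂ :=
  fun z => ∑ i, ∑ j, B i j * pdC i (pdC j f) z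

/-- The operator `L = (B(D))^p + ∑_{|α| ≤ p} a_α(z) D^α` on functions on `ℂⁿ`. -/
def LC {n : ℕ} (B : Matrix (Fin n) (Fin n) ℂ) (p : ℕ)
    (a : (Fin n → ℕ) → (Fin n → ℂ) → ℂ) (u : (Fin n → ℂ) → ℂ) : (Fin n → ℂ) → ℂ :=
  fun z => ((BDop B)^[p] u) z +
    ∑ l ∈ Finset.range (p + 1), ∑ α ∈ Finset.Nat.antidiagonalTuple n l, a α z * DFc α u z

end

/-! Writing `x = |x| θ` with `|θ| = 1`, homogeneity gives `|P(x)| ≤ M |x|^k`, so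
`‖P f‖²_rF ≤ M² ∫ |x|^{2k} |f(x)|² e^{-|x|²} dx`. For a homogeneous polynomial `g` of degree `d`,
expanding into monomials and using `∫_ℝ t^{b+2} e^{-t²} = (b+1)/2 ∫_ℝ t^b e^{-t²}` in each
coordinate gives `∫ |x|² g e^{-|x|²} = (d+n)/2 ∫ g e^{-|x|²}`. Applied to `g = |x|^{2i} f f̄`
this turns the weighted integral into `∏_{i<k} (2m+2i+n)/2 · ‖f‖²_rF`, and the recursion
`I_{j+2} = (j+1)/2 I_j` identifies the product with `I_{2m+2k+n-1}/I_{2m+n-1}`. Bounding each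
factor by `(1+m)(n+2i+2)/2` gives the second estimate. -/

theorem MvPolynomial.IsHomogeneous.sum_eq_of_mem_support {σ R : Type*} [Fintype σ]
    [CommSemiring R] {φ : MvPolynomial σ R} {d : ℕ} (hφ : φ.IsHomogeneous d) {α : σ →₀ ℕ}
    (hα : α ∈ φ.support) : ∑ i, α i = d := by
  rw [← Finsupp.degree_eq_sum, Finsupp.degree_eq_weight_one]
  exact hφ (mem_support_iff.mp hα)

theorem MvPolynomial.IsHomogeneous.eval_smul {σ R : Type*} [Fintype σ] [CommSemiring R]
    {φ : MvPolynomial σ R} {d : ℕ} (hφ : φ.IsHomogeneous d) (c : R) (v : σ → R) :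
    eval (c • v) φ = c ^ d * eval v φ := by
  rw [eval_eq', eval_eq', Finset.mul_sum]
  refine Finset.sum_congr rfl fun α hα => ?_
  simp_rw [Pi.smul_apply, smul_eq_mul, mul_pow]
  rw [Finset.prod_mul_distrib, Finset.prod_pow_eq_pow_sum, hφ.sum_eq_of_mem_support hα]
  ring

lemma Ii_eq_half_mul_Gamma (m : ℕ) : Ii m = 1 / 2 * Real.Gamma ((m + 1) / 2) := by
  rw [Ii, ← integral_rpow_mul_exp_neg_rpow two_pos (by linarith [m.cast_nonneg (α := ℝ)])]
  refine setIntegral_congr_fun measurableSet_Ioi fun x _ => ?_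
  rw [Real.rpow_natCast, Real.rpow_two, mul_comm]

lemma Ii_pos (m : ℕ) : 0 < Ii m := by
  rw [Ii_eq_half_mul_Gamma]
  have := Real.Gamma_pos_of_pos (show (0 : ℝ) < (m + 1) / 2 by positivity)
  positivity

lemma Ii_add_two (m : ℕ) : Ii (m + 2) = (m + 1) / 2 * Ii m := by
  rw [Ii_eq_half_mul_Gamma, Ii_eq_half_mul_Gamma,
    show ((m + 2 : ℕ) + 1 : ℝ) / 2 = (m + 1) / 2 + 1 by push_cast; ring,
    Real.Gamma_add_one (by positivity)]
  ring

lemma Ii_add_two_mul (b j : ℕ) :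
    Ii (b + 2 * j) = (∏ i ∈ Finset.range j, ((b + 2 * i + 1 : ℝ) / 2)) * Ii b := by
  induction j with
  | zero => simp
  | succ j ih =>
    rw [show b + 2 * (j + 1) = b + 2 * j + 2 by ring, Ii_add_two, ih, Finset.prod_range_succ]
    push_cast
    ring

noncomputable def gaussMoment (b : ℕ) : ℝ := ∫ t : ℝ, t ^ b * Real.exp (-t ^ 2)

lemma integrable_pow_mul_exp_neg_sq (b : ℕ) :
    Integrable fun t : ℝ => t ^ b * Real.exp (-t ^ 2) := by
  simpa [Real.rpow_natCast] using
    integrable_rpow_mul_exp_neg_mul_sq one_pos (s := b) (by linarith [b.cast_nonneg (α := ℝ)])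

lemma gaussMoment_eq_mul_Ii (b : ℕ) : gaussMoment b = (1 + (-1) ^ b) * Ii b := by
  have hint := integrable_pow_mul_exp_neg_sq b
  have hneg : ∫ t in Set.Iic (0 : ℝ), t ^ b * Real.exp (-t ^ 2) = (-1) ^ b * Ii b := by
    rw [← neg_zero, ← integral_comp_neg_Ioi, Ii, ← integral_const_mul]
    refine setIntegral_congr_fun measurableSet_Ioi fun t _ => ?_
    rw [neg_pow, neg_sq]
    ring
  have hpos : ∫ t in Set.Ioi (0 : ℝ), t ^ b * Real.exp (-t ^ 2) = Ii b :=
    setIntegral_congr_fun measurableSet_Ioi fun t _ => mul_comm _ _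
  rw [gaussMoment, ← intervalIntegral.integral_Iic_add_Ioi hint.integrableOn hint.integrableOn,
    hneg, hpos]
  ring

lemma gaussMoment_add_two (b : ℕ) : gaussMoment (b + 2) = (b + 1) / 2 * gaussMoment b := by
  rw [gaussMoment_eq_mul_Ii, gaussMoment_eq_mul_Ii, Ii_add_two, pow_add]
  ring

section GaussIntegral

variable {n : ℕ}

lemma evalR_monomial_mul_exp (α : Fin n →₀ ℕ) (c : ℂ) (x : Fin n → ℝ) :
    evalR (monomial α c) x * Real.exp (-(∑ i, x i ^ 2)) =
      c * ∏ i, ((x i ^ α i * Real.exp (-x i ^ 2) : ℝ) : ℂ) := by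
  simp only [evalR, eval_monomial, Finsupp.prod_fintype _ _ (fun i => pow_zero _),
    Complex.ofReal_mul, Complex.ofReal_pow, Finset.prod_mul_distrib, ← Complex.ofReal_prod,
    ← Real.exp_sum, Finset.sum_neg_distrib]
  ring

lemma integrable_evalR_monomial_mul_exp (α : Fin n →₀ ℕ) (c : ℂ) :
    Integrable fun x => evalR (monomial α c) x * Real.exp (-(∑ i, x i ^ 2)) := by
  simp only [evalR_monomial_mul_exp]
  exact (Integrable.fintype_prod
    (f := fun i (t : ℝ) => ((t ^ α i * Real.exp (-t ^ 2) : ℝ) : ℂ))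
    fun i => (integrable_pow_mul_exp_neg_sq (α i)).ofReal).const_mul c

lemma integrable_evalR_mul_exp (g : MvPolynomial (Fin n) ℂ) :
    Integrable fun x => evalR g x * Real.exp (-(∑ i, x i ^ 2)) := by
  induction g using MvPolynomial.induction_on' with
  | monomial α c => exact integrable_evalR_monomial_mul_exp α c
  | add p q hp hq =>
    simp only [evalR, map_add, add_mul]
    exact hp.add hq

noncomputable def gaussIntegral : MvPolynomial (Fin n) ℂ →ₗ[ℂ] ℂ where
  toFun g := ∫ x, evalR g x * Real.exp (-(∑ i, x i ^ 2))
  map_add' p q := by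
    simp only [evalR, map_add, add_mul]
    exact integral_add (integrable_evalR_mul_exp p) (integrable_evalR_mul_exp q)
  map_smul' c p := by
    simp only [evalR, smul_eval, mul_assoc, RingHom.id_apply, smul_eq_mul]
    exact integral_const_mul c _

lemma gaussIntegral_apply (g : MvPolynomial (Fin n) ℂ) :
    gaussIntegral g = ∫ x, evalR g x * Real.exp (-(∑ i, x i ^ 2)) := rfl

lemma gaussIntegral_monomial (α : Fin n →₀ ℕ) (c : ℂ) :
    gaussIntegral (monomial α c) = c * ∏ i, (gaussMoment (α i) : ℂ) := by
  simp only [gaussIntegral_apply, evalR_monomial_mul_exp, integral_const_mul]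
  rw [integral_fintype_prod_volume_eq_prod
    (fun i (t : ℝ) => ((t ^ α i * Real.exp (-t ^ 2) : ℝ) : ℂ))]
  exact congrArg (c * ·) (Finset.prod_congr rfl fun i _ => integral_ofReal)

end GaussIntegral

section Radial

variable {n : ℕ}

lemma isHomogeneous_radSq : (radSq n).IsHomogeneous 2 :=
  IsHomogeneous.sum _ _ _ fun i _ => isHomogeneous_X_pow i 2

lemma evalR_radSq (x : Fin n → ℝ) : evalR (radSq n) x = ((∑ i, x i ^ 2 : ℝ) : ℂ) := by
  simp [evalR, radSq]

lemma prod_gaussMoment_single_two_add (α : Fin n →₀ ℕ) (i : Fin n) :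
    ∏ j, (gaussMoment ((Finsupp.single i 2 + α : Fin n →₀ ℕ) j) : ℂ) =
      (α i + 1) / 2 * ∏ j, (gaussMoment (α j) : ℂ) := by
  have hfactor : ∀ j, (gaussMoment ((Finsupp.single i 2 + α : Fin n →₀ ℕ) j) : ℂ) =
      (if i = j then ((α i : ℂ) + 1) / 2 else 1) * gaussMoment (α j) := by
    intro j
    by_cases hij : i = j
    · subst hij
      rw [Finsupp.add_apply, Finsupp.single_eq_same, add_comm, gaussMoment_add_two, if_pos rfl]
      push_cast
      ring
    · simp [hij]
  rw [Finset.prod_congr rfl fun j _ => hfactor j, Finset.prod_mul_distrib, Finset.prod_ite_eq,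
    if_pos (Finset.mem_univ i)]

lemma gaussIntegral_radSq_mul_monomial (α : Fin n →₀ ℕ) (c : ℂ) :
    gaussIntegral (radSq n * monomial α c) =
      (((∑ i, α i : ℕ) : ℂ) + n) / 2 * gaussIntegral (monomial α c) := by
  have hexpand : radSq n * monomial α c = ∑ i, monomial (Finsupp.single i 2 + α) c := by
    simp only [radSq, Finset.sum_mul, X_pow_eq_monomial, monomial_mul, one_mul]
  rw [hexpand, map_sum, Finset.sum_congr rfl fun i _ => by
    rw [gaussIntegral_monomial, prod_gaussMoment_single_two_add], gaussIntegral_monomial]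
  have hsum : ∑ i : Fin n, ((α i : ℂ) + 1) / 2 = (((∑ i, α i : ℕ) : ℂ) + n) / 2 := by
    rw [← Finset.sum_div, Finset.sum_add_distrib]
    simp
  rw [← hsum, Finset.sum_mul]
  exact Finset.sum_congr rfl fun i _ => by ring

lemma gaussIntegral_radSq_mul {g : MvPolynomial (Fin n) ℂ} {d : ℕ} (hg : g.IsHomogeneous d) :
    gaussIntegral (radSq n * g) = ((d : ℂ) + n) / 2 * gaussIntegral g := by
  conv_lhs => rw [g.as_sum, Finset.mul_sum, map_sum]
  conv_rhs => rw [g.as_sum, map_sum, Finset.mul_sum]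
  refine Finset.sum_congr rfl fun α hα => ?_
  rw [gaussIntegral_radSq_mul_monomial, hg.sum_eq_of_mem_support hα]

lemma gaussIntegral_radSq_pow_mul {g : MvPolynomial (Fin n) ℂ} {d : ℕ} (hg : g.IsHomogeneous d)
    (j : ℕ) : gaussIntegral (radSq n ^ j * g) =
      (∏ i ∈ Finset.range j, ((d + 2 * i + n : ℂ) / 2)) * gaussIntegral g := by
  induction j with
  | zero => simp
  | succ j ih =>
    have hj : (radSq n ^ j * g).IsHomogeneous (2 * j + d) :=
      (isHomogeneous_radSq.pow j).mul hg
    rw [pow_succ', mul_assoc, gaussIntegral_radSq_mul hj, ih, Finset.prod_range_succ]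
    push_cast
    ring

end Radial

section RadialMoment

variable {n : ℕ}

noncomputable def radialMoment (f : MvPolynomial (Fin n) ℂ) (j : ℕ) : ℝ :=
  ∫ x, (∑ i, x i ^ 2) ^ j * ‖evalR f x‖ ^ 2 * Real.exp (-(∑ i, x i ^ 2))

lemma evalR_map_conj (f : MvPolynomial (Fin n) ℂ) (x : Fin n → ℝ) :
    evalR (map (starRingEnd ℂ) f) x = starRingEnd ℂ (evalR f x) := by
  rw [evalR, evalR, eval_map, eval₂_comp]
  congr 1
  funext i
  simp

lemma evalR_radSq_pow_mul_normSq_mul_exp (f : MvPolynomial (Fin n) ℂ) (j : ℕ)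
    (x : Fin n → ℝ) :
    evalR (radSq n ^ j * (f * map (starRingEnd ℂ) f)) x * Real.exp (-(∑ i, x i ^ 2)) =
      (((∑ i, x i ^ 2) ^ j * ‖evalR f x‖ ^ 2 * Real.exp (-(∑ i, x i ^ 2)) : ℝ) : ℂ) := by
  have hmul : ∀ p q : MvPolynomial (Fin n) ℂ, evalR (p * q) x = evalR p x * evalR q x :=
    fun p q => map_mul _ p q
  have hpow : evalR (radSq n ^ j) x = evalR (radSq n) x ^ j := map_pow _ _ j
  rw [hmul, hmul, hpow, evalR_map_conj, Complex.mul_conj, Complex.normSq_eq_norm_sq,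
    evalR_radSq]
  push_cast
  ring

lemma integrable_radialMoment (f : MvPolynomial (Fin n) ℂ) (j : ℕ) :
    Integrable fun x : Fin n → ℝ =>
      (∑ i, x i ^ 2) ^ j * ‖evalR f x‖ ^ 2 * Real.exp (-(∑ i, x i ^ 2)) := by
  refine (integrable_evalR_mul_exp (radSq n ^ j * (f * map (starRingEnd ℂ) f))).re.congr
    (Filter.Eventually.of_forall fun x => ?_)
  simp only [evalR_radSq_pow_mul_normSq_mul_exp]
  exact Complex.ofReal_re _

lemma ofReal_radialMoment (f : MvPolynomial (Fin n) ℂ) (j : ℕ) :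
    (radialMoment f j : ℂ) = gaussIntegral (radSq n ^ j * (f * map (starRingEnd ℂ) f)) := by
  simp only [radialMoment, gaussIntegral_apply, evalR_radSq_pow_mul_normSq_mul_exp]
  exact integral_ofReal.symm

lemma radialMoment_eq_prod_mul {f : MvPolynomial (Fin n) ℂ} {m : ℕ} (hf : f.IsHomogeneous m)
    (j : ℕ) : radialMoment f j =
      (∏ i ∈ Finset.range j, ((2 * m + 2 * i + n : ℝ) / 2)) * radialMoment f 0 := by
  apply Complex.ofReal_injective
  have hconj : (f * map (starRingEnd ℂ) f).IsHomogeneous (m + m) := hf.mul (hf.map _)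
  rw [Complex.ofReal_mul, ofReal_radialMoment, ofReal_radialMoment,
    gaussIntegral_radSq_pow_mul hconj, pow_zero, one_mul]
  push_cast
  exact congrArg (· * _) (Finset.prod_congr rfl fun i _ => by ring)

lemma rFNorm_eq_sqrt_radialMoment_zero (f : MvPolynomial (Fin n) ℂ) :
    rFNorm f = Real.sqrt (radialMoment f 0) := by
  simp only [rFNorm, radialMoment, pow_zero, one_mul]

end RadialMoment

section PointwiseBound

variable {n k : ℕ} {P : MvPolynomial (Fin n) ℂ} {M : ℝ}

lemma evalR_smul_of_isHomogeneous (hP : P.IsHomogeneous k) (r : ℝ) (x : Fin n → ℝ) :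
    evalR P (r • x) = r ^ k * evalR P x := by
  have hcoe : (fun i => ((r • x) i : ℂ)) = (r : ℂ) • fun i => (x i : ℂ) := by
    funext i
    exact Complex.ofReal_mul r (x i)
  rw [evalR, hcoe, hP.eval_smul]
  rfl

lemma exists_sum_sq_eq_one_and_eq_smul (hn : 0 < n) (x : Fin n → ℝ) :
    ∃ θ : Fin n → ℝ, ∑ i, θ i ^ 2 = 1 ∧ x = Real.sqrt (∑ i, x i ^ 2) • θ := by
  by_cases hx : ∑ i, x i ^ 2 = 0
  · refine ⟨Pi.single ⟨0, hn⟩ 1, by simp [Pi.single_apply], ?_⟩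
    rw [hx, Real.sqrt_zero, zero_smul]
    funext i
    exact pow_eq_zero_iff two_ne_zero |>.mp
      ((Finset.sum_eq_zero_iff_of_nonneg fun j _ => sq_nonneg (x j)).mp hx i (Finset.mem_univ i))
  · have hpos : 0 < ∑ i, x i ^ 2 := lt_of_le_of_ne (by positivity) (Ne.symm hx)
    have hr : 0 < Real.sqrt (∑ i, x i ^ 2) := Real.sqrt_pos.mpr hpos
    refine ⟨(Real.sqrt (∑ i, x i ^ 2))⁻¹ • x, ?_, ?_⟩
    · simp only [Pi.smul_apply, smul_eq_mul, mul_pow, ← Finset.mul_sum, inv_pow,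
        Real.sq_sqrt hpos.le]
      exact inv_mul_cancel₀ hx
    · rw [smul_smul, mul_inv_cancel₀ hr.ne', one_smul]

lemma norm_evalR_le_of_isHomogeneous (hn : 0 < n) (hP : P.IsHomogeneous k)
    (hM : ∀ θ : Fin n → ℝ, ∑ i, θ i ^ 2 = 1 → ‖evalR P θ‖ ≤ M) (x : Fin n → ℝ) :
    ‖evalR P x‖ ≤ M * Real.sqrt (∑ i, x i ^ 2) ^ k := by
  obtain ⟨θ, hθ, hx⟩ := exists_sum_sq_eq_one_and_eq_smul hn x
  nth_rewrite 1 [hx]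
  rw [evalR_smul_of_isHomogeneous hP, norm_mul, norm_pow, Complex.norm_real,
    Real.norm_of_nonneg (Real.sqrt_nonneg _), mul_comm]
  exact mul_le_mul_of_nonneg_right (hM θ hθ) (by positivity)

lemma norm_evalR_mul_sq_le (hn : 0 < n) (hP : P.IsHomogeneous k)
    (hM : ∀ θ : Fin n → ℝ, ∑ i, θ i ^ 2 = 1 → ‖evalR P θ‖ ≤ M)
    (f : MvPolynomial (Fin n) ℂ) (x : Fin n → ℝ) :
    ‖evalR (P * f) x‖ ^ 2 ≤ M ^ 2 * (∑ i, x i ^ 2) ^ k * ‖evalR f x‖ ^ 2 := by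
  calc ‖evalR (P * f) x‖ ^ 2 = (‖evalR P x‖ * ‖evalR f x‖) ^ 2 := by
        rw [← norm_mul]
        exact congrArg (‖·‖ ^ 2) (map_mul _ P f)
    _ ≤ (M * Real.sqrt (∑ i, x i ^ 2) ^ k * ‖evalR f x‖) ^ 2 := by
        gcongr
        exact norm_evalR_le_of_isHomogeneous hn hP hM x
    _ = M ^ 2 * (∑ i, x i ^ 2) ^ k * ‖evalR f x‖ ^ 2 := by
        rw [mul_pow, mul_pow, ← pow_mul, mul_comm k, pow_mul, Real.sq_sqrt (by positivity)]

lemma rFNorm_mul_le (hn : 0 < n) (hP : P.IsHomogeneous k) (hM0 : 0 ≤ M)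
    (hM : ∀ θ : Fin n → ℝ, ∑ i, θ i ^ 2 = 1 → ‖evalR P θ‖ ≤ M)
    {f : MvPolynomial (Fin n) ℂ} {m : ℕ} (hf : f.IsHomogeneous m) :
    rFNorm (P * f) ≤
      M * Real.sqrt (∏ i ∈ Finset.range k, ((2 * m + 2 * i + n : ℝ) / 2)) * rFNorm f := by
  have hmoment : radialMoment (P * f) 0 ≤ M ^ 2 * radialMoment f k := by
    rw [radialMoment, radialMoment, ← integral_const_mul]
    refine integral_mono (integrable_radialMoment _ 0)
      ((integrable_radialMoment f k).const_mul _) fun x => ?_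
    have hexp := (Real.exp_pos (-(∑ i, x i ^ 2))).le
    have := mul_le_mul_of_nonneg_right (norm_evalR_mul_sq_le hn hP hM f x) hexp
    simp only [pow_zero, one_mul]
    linarith
  rw [radialMoment_eq_prod_mul hf] at hmoment
  rw [rFNorm_eq_sqrt_radialMoment_zero, rFNorm_eq_sqrt_radialMoment_zero, ← Real.sqrt_sq hM0,
    ← Real.sqrt_mul (sq_nonneg M), ← Real.sqrt_mul (by positivity)]
  exact Real.sqrt_le_sqrt (by linarith)

end PointwiseBound

lemma Ii_div_Ii_eq_prod {n : ℕ} (hn : 0 < n) (m k : ℕ) :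
    Ii (2 * m + 2 * k + n - 1) / Ii (2 * m + n - 1) =
      ∏ i ∈ Finset.range k, ((2 * m + 2 * i + n : ℝ) / 2) := by
  rw [show 2 * m + 2 * k + n - 1 = 2 * m + n - 1 + 2 * k by omega, Ii_add_two_mul,
    mul_div_assoc, div_self (Ii_pos _).ne', mul_one]
  refine Finset.prod_congr rfl fun i _ => ?_
  rw [Nat.cast_sub (by omega)]
  push_cast
  ring

lemma prod_le_one_add_pow_mul_prod (m n k : ℕ) :
    ∏ i ∈ Finset.range k, ((2 * m + 2 * i + n : ℝ) / 2) ≤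
      (1 + m) ^ k * ∏ i ∈ Finset.range k, ((n + 2 * i + 2 : ℝ) / 2) := by
  rw [← Finset.card_range k, ← Finset.prod_const, Finset.card_range, ← Finset.prod_mul_distrib]
  refine Finset.prod_le_prod (fun i _ => by positivity) fun i _ => ?_
  have : (0 : ℝ) ≤ m * (n + 2 * i) := by positivity
  linarith

theorem stmt_6_general (n k : ℕ) (hn : 0 < n)
    (P : MvPolynomial (Fin n) ℂ) (hPhom : P.IsHomogeneous k)
    (M : ℝ)
    (hM : IsGreatest
      {y : ℝ | ∃ θ : Fin n → ℝ, (∑ i, θ i ^ 2) = 1 ∧ y = ‖evalR P θ‖} M) :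
    (∀ (m : ℕ) (f : MvPolynomial (Fin n) ℂ), f.IsHomogeneous m →
      rFNorm (P * f) ≤
        M * Real.sqrt (Ii (2 * m + 2 * k + n - 1) / Ii (2 * m + n - 1)) * rFNorm f) ∧
    ∃ D : ℝ, 0 < D ∧ ∀ (m : ℕ) (f : MvPolynomial (Fin n) ℂ), f.IsHomogeneous m →
      rFNorm (P * f) ≤ D * M * Real.sqrt (((1 : ℝ) + m) ^ k) * rFNorm f := by
  have hM0 : 0 ≤ M := by
    obtain ⟨θ, -, hθ⟩ := hM.1
    exact hθ ▸ norm_nonneg _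
  have hMbound : ∀ θ : Fin n → ℝ, ∑ i, θ i ^ 2 = 1 → ‖evalR P θ‖ ≤ M :=
    fun θ hθ => hM.2 ⟨θ, hθ, rfl⟩
  have hest := fun m f (hf : IsHomogeneous f m) => rFNorm_mul_le hn hPhom hM0 hMbound hf
  refine ⟨fun m f hf => Ii_div_Ii_eq_prod hn m k ▸ hest m f hf, ?_⟩
  set C := ∏ i ∈ Finset.range k, ((n + 2 * i + 2 : ℝ) / 2)
  have hC : 0 < C := Finset.prod_pos fun i _ => by positivity
  refine ⟨Real.sqrt C, Real.sqrt_pos.mpr hC, fun m f hf => (hest m f hf).trans ?_⟩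
  calc M * Real.sqrt (∏ i ∈ Finset.range k, ((2 * m + 2 * i + n : ℝ) / 2)) * rFNorm f
      ≤ M * Real.sqrt ((1 + m) ^ k * C) * rFNorm f :=
        mul_le_mul_of_nonneg_right (mul_le_mul_of_nonneg_left
          (Real.sqrt_le_sqrt (prod_le_one_add_pow_mul_prod m n k)) hM0) (Real.sqrt_nonneg _)
    _ = Real.sqrt C * M * Real.sqrt ((1 + m) ^ k) * rFNorm f := by
        rw [Real.sqrt_mul (by positivity)]
        ring

/-- Proposition `Pest`, real case: for a homogeneous polynomial `P_k` of
degree `k` and `M_ℝ = max_{θ ∈ S^{n-1}} |P_k(θ)|`, one has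
`‖P_k f_m‖_rF ≤ M_ℝ √(I_{2m+2k+n-1}/I_{2m+n-1}) ‖f_m‖_rF`, and there is `D_{k,n} > 0` with
`‖P_k f_m‖_rF ≤ D_{k,n} M_ℝ √((1+m)^k) ‖f_m‖_rF`. -/
theorem stmt_6 (n k : ℕ) (hn : 0 < n) (hk : 0 < k)
    (P : MvPolynomial (Fin n) ℂ) (hPhom : P.IsHomogeneous k)
    (M : ℝ)
    (hM : IsGreatest
      {y : ℝ | ∃ θ : Fin n → ℝ, (∑ i, θ i ^ 2) = 1 ∧ y = ‖evalR P θ‖} M) :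
    (∀ (m : ℕ) (f : MvPolynomial (Fin n) ℂ), f.IsHomogeneous m →
      rFNorm (P * f) ≤
        M * Real.sqrt (Ii (2 * m + 2 * k + n - 1) / Ii (2 * m + n - 1)) * rFNorm f) ∧
    ∃ D : ℝ, 0 < D ∧ ∀ (m : ℕ) (f : MvPolynomial (Fin n) ℂ), f.IsHomogeneous m →
      rFNorm (P * f) ≤ D * M * Real.sqrt (((1 : ℝ) + m) ^ k) * rFNorm f :=
  stmt_6_general n k hn P hPhom M hM
end

section
/- Let α ∈ ℕ₀^n be a multi-index and D^α = ∂^{|α|}/∂x^α the corresponding differential operator. Then for every homogeneous polynomial f_m of degree m in n variables with complex coefficients, ‖D^α f_m‖_F ≤ √(m^{|α|}) ‖f_m‖_F. -/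
open MvPolynomial MeasureTheory Filter Matrix

noncomputable section

/-! In the Fischer inner product the monomials are orthogonal with `‖X^γ‖² = γ!`, and `∂ᵢ` maps
`X^γ` to `γᵢ X^{γ - eᵢ}`; hence `‖∂ᵢ f‖² = ∑_γ γᵢ γ! |c_γ|² ≤ (deg_{xᵢ} f) ‖f‖²`. Differentiation
does not raise the total degree, so each of the `|α|` derivatives in `D^α` costs at most a
factor `m` in `‖·‖²`. -/

theorem Finsupp.prod_factorial_add_single {σ : Type*} [Fintype σ] [DecidableEq σ]
    (β : σ →₀ ℕ) (i : σ) :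
    ∏ j, ((β + Finsupp.single i 1 : σ →₀ ℕ) j).factorial = (β i + 1) * ∏ j, (β j).factorial := by
  rw [← Fintype.prod_pi_mulSingle' i (β i + 1), ← Finset.prod_mul_distrib]
  refine Finset.prod_congr rfl fun j _ => ?_
  rcases eq_or_ne j i with rfl | hj
  · simp [Nat.factorial_succ]
  · simp [hj]

namespace MvPolynomial

section

variable {σ R : Type*} [CommSemiring R]

theorem totalDegree_pderiv_le [DecidableEq σ] (i : σ) (f : MvPolynomial σ R) :
    (pderiv i f).totalDegree ≤ f.totalDegree := by
  refine Finset.sup_le fun β hβ => ?_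
  rw [mem_support_iff, coeff_pderiv] at hβ
  have hβf : β + Finsupp.single i 1 ∈ f.support := mem_support_iff.mpr (left_ne_zero_of_mul hβ)
  refine le_trans ?_ (le_totalDegree hβf)
  simp [Finsupp.sum_add_index']

theorem totalDegree_iterate_pderiv_le [DecidableEq σ] (i : σ) (k : ℕ) (f : MvPolynomial σ R) :
    ((pderiv i)^[k] f).totalDegree ≤ f.totalDegree := by
  induction k with
  | zero => rfl
  | succ k ih =>
    rw [Function.iterate_succ_apply']
    exact (totalDegree_pderiv_le i _).trans ih

end

section Fischer

variable {σ : Type*} [Fintype σ]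

def fischerNormSq (f : MvPolynomial σ ℂ) : ℝ :=
  ∑ β ∈ f.support, (∏ j, ((β j).factorial : ℝ)) * Complex.normSq (coeff β f)

theorem fischerNormSq_nonneg (f : MvPolynomial σ ℂ) : 0 ≤ fischerNormSq f :=
  Finset.sum_nonneg fun _ _ => mul_nonneg (by positivity) (Complex.normSq_nonneg _)

theorem fischerNormSq_pderiv_le [DecidableEq σ] (i : σ) (f : MvPolynomial σ ℂ) :
    fischerNormSq (pderiv i f) ≤ f.degreeOf i * fischerNormSq f := by
  set e : σ →₀ ℕ := Finsupp.single i 1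
  set t : (σ →₀ ℕ) → ℝ := fun γ => (∏ j, ((γ j).factorial : ℝ)) * Complex.normSq (coeff γ f)
  have ht_nonneg : ∀ γ, 0 ≤ t γ := fun γ => mul_nonneg (by positivity) (Complex.normSq_nonneg _)
  -- `∂ᵢ` sends `c_{β+e} X^{β+e}` to `(βᵢ+1) c_{β+e} X^β`, and `β! (βᵢ+1) = (β+e)!`
  have hterm : ∀ β, (∏ j, ((β j).factorial : ℝ)) * Complex.normSq (coeff β (pderiv i f)) =
      (β + e) i * t (β + e) := by
    intro β
    have hfac : ∏ j, (((β + e) j).factorial : ℝ) = (β i + 1) * ∏ j, ((β j).factorial : ℝ) := by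
      exact_mod_cast Finsupp.prod_factorial_add_single β i
    have hcoeff : coeff β (pderiv i f) = coeff (β + e) f * ((β i + 1 : ℕ) : ℂ) := by
      rw [coeff_pderiv]; push_cast; rfl
    have hi : (β + e) i = β i + 1 := by simp [e]
    simp only [t, hcoeff, Complex.normSq_mul, Complex.normSq_natCast, hfac, hi]
    push_cast
    ring
  have himage : (pderiv i f).support.image (· + e) ⊆ f.support := by
    intro γ hγ
    obtain ⟨β, hβ, rfl⟩ := Finset.mem_image.mp hγ
    rw [mem_support_iff, coeff_pderiv] at hβ
    exact mem_support_iff.mpr (left_ne_zero_of_mul hβ)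
  calc fischerNormSq (pderiv i f)
      = ∑ γ ∈ (pderiv i f).support.image (· + e), γ i * t γ := by
        rw [Finset.sum_image fun _ _ _ _ h => add_right_cancel h]
        exact Finset.sum_congr rfl fun β _ => hterm β
    _ ≤ ∑ γ ∈ f.support, γ i * t γ :=
        Finset.sum_le_sum_of_subset_of_nonneg himage fun γ _ _ =>
          mul_nonneg (Nat.cast_nonneg _) (ht_nonneg γ)
    _ ≤ ∑ γ ∈ f.support, f.degreeOf i * t γ := by
        refine Finset.sum_le_sum fun γ hγ => mul_le_mul_of_nonneg_right ?_ (ht_nonneg γ)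
        exact_mod_cast monomial_le_degreeOf i hγ
    _ = f.degreeOf i * fischerNormSq f := (Finset.mul_sum _ _ _).symm

theorem fischerNormSq_iterate_pderiv_le [DecidableEq σ] (i : σ) (k : ℕ) {m : ℕ}
    {f : MvPolynomial σ ℂ} (hf : f.totalDegree ≤ m) :
    fischerNormSq ((pderiv i)^[k] f) ≤ m ^ k * fischerNormSq f := by
  induction k with
  | zero => simp
  | succ k ih =>
    set g := (pderiv i)^[k] f
    have hg : (g.degreeOf i : ℝ) ≤ m := by
      exact_mod_cast (degreeOf_le_totalDegree g i).trans
        ((totalDegree_iterate_pderiv_le i k f).trans hf)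
    calc fischerNormSq ((pderiv i)^[k + 1] f)
        ≤ g.degreeOf i * fischerNormSq g := by
          rw [Function.iterate_succ_apply']; exact fischerNormSq_pderiv_le i g
      _ ≤ m * (m ^ k * fischerNormSq f) :=
          mul_le_mul hg ih (fischerNormSq_nonneg g) (Nat.cast_nonneg m)
      _ = m ^ (k + 1) * fischerNormSq f := by ring

theorem fischerNormSq_foldl_iterate_pderiv_le [DecidableEq σ] (α : σ → ℕ) (l : List σ)
    {m : ℕ} {f : MvPolynomial σ ℂ} (hf : f.totalDegree ≤ m) :
    fischerNormSq (l.foldl (fun g i => (pderiv i)^[α i] g) f) ≤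
      m ^ (l.map α).sum * fischerNormSq f := by
  induction l generalizing f with
  | nil => simp
  | cons i l ih =>
    have hg := (totalDegree_iterate_pderiv_le i (α i) f).trans hf
    calc fischerNormSq (l.foldl (fun g i => (pderiv i)^[α i] g) ((pderiv i)^[α i] f))
        ≤ m ^ (l.map α).sum * fischerNormSq ((pderiv i)^[α i] f) := ih hg
      _ ≤ m ^ (l.map α).sum * (m ^ α i * fischerNormSq f) :=
          mul_le_mul_of_nonneg_left (fischerNormSq_iterate_pderiv_le i (α i) hf) (by positivity)
      _ = m ^ ((i :: l).map α).sum * fischerNormSq f := by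
          rw [List.map_cons, List.sum_cons, pow_add]; ring

end Fischer

end MvPolynomial

theorem FNorm_eq_sqrt_fischerNormSq {n : ℕ} (f : MvPolynomial (Fin n) ℂ) :
    FNorm f = √(MvPolynomial.fischerNormSq f) := by
  rw [FNorm, FInner, Finset.union_self, Complex.re_sum]
  congr 1
  refine Finset.sum_congr rfl fun β _ => ?_
  rw [mul_assoc, Complex.mul_conj, Complex.re_mul_ofReal, ← Nat.cast_prod, Complex.natCast_re,
    Nat.cast_prod]

/-- Proposition `PropDeriv`, complex Fischer norm:
`‖D^α f_m‖_F ≤ √(m^{|α|}) ‖f_m‖_F` for homogeneous `f_m` of degree `m`. -/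
theorem stmt_8 (n m : ℕ) (α : Fin n → ℕ) (f : MvPolynomial (Fin n) ℂ)
    (hf : f.IsHomogeneous m) :
    FNorm (DP α f) ≤ Real.sqrt ((m : ℝ) ^ (∑ i, α i)) * FNorm f := by
  have key := MvPolynomial.fischerNormSq_foldl_iterate_pderiv_le α (List.finRange n)
    hf.totalDegree_le
  rw [← Fin.sum_univ_def] at key
  rw [FNorm_eq_sqrt_fischerNormSq, FNorm_eq_sqrt_fischerNormSq, ← Real.sqrt_mul (by positivity)]
  exact Real.sqrt_le_sqrt key
end
end

section
/- Let h be a homogeneous harmonic polynomial of degree d in n variables with complex coefficients (i.e. Δh = 0), and let s ≥ 0 and p ≥ 1 be integers. Then Δ^p(|x|^{2s+2p} h(x)) = d_p(s,d) |x|^{2s} h(x), where d_p(s,m) := 2^p (s+p)(s+p-1)⋯(s+1) · (2s+2p-2+n+2m)(2s+2p-4+n+2m)⋯(2s+n+2m), i.e. d_p(s,m) = 2^p ∏_{i=1}^{p}(s+i) · ∏_{i=0}^{p-1}(2s+n+2m+2i), and |x|² = x_1² + ⋯ + x_n². -/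
open MvPolynomial MeasureTheory Filter Matrix

/-!
Write `r² = radSq n`. By the Leibniz rule for `Δ`,
`Δ(r^{2k+2} h) = Δ(r^{2k+2}) h + 2 ∇(r^{2k+2}) · ∇h + r^{2k+2} Δh`, and Euler's identity
`∑ xᵢ ∂ᵢ φ = (deg φ) φ`, applied to `r^{2k}` and to `h`, evaluates the first two terms, giving
`Δ(r^{2k+2} h) = 2(k+1)(2k+n+2d) r^{2k} h` when `h` is harmonic of degree `d`.
Iterating this `p` times yields the product `d_p(s,d)`.
-/

namespace MvPolynomial

variable {n : ℕ}

lemma lapP_mul (f g : MvPolynomial (Fin n) ℂ) :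
    lapP (f * g) = lapP f * g + 2 * ∑ i, pderiv i f * pderiv i g + f * lapP g := by
  simp only [lapP, pderiv_mul, map_add, Finset.sum_mul, Finset.mul_sum, ← Finset.sum_add_distrib]
  exact Finset.sum_congr rfl fun i _ => by ring

lemma lapP_nsmul (m : ℕ) (f : MvPolynomial (Fin n) ℂ) : lapP (m • f) = m • lapP f := by
  simp only [lapP, map_nsmul, Finset.smul_sum]

lemma iterate_lapP_nsmul (p m : ℕ) (f : MvPolynomial (Fin n) ℂ) :
    lapP^[p] (m • f) = m • lapP^[p] f :=
  Function.Commute.iterate_left (fun g => lapP_nsmul m g) p f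

lemma isHomogeneous_radSq : (radSq n).IsHomogeneous 2 :=
  IsHomogeneous.sum _ _ _ fun i _ => isHomogeneous_X_pow i 2

lemma pderiv_radSq (i : Fin n) : pderiv i (radSq n) = 2 * X i := by
  rw [radSq, map_sum, Finset.sum_eq_single i]
  · rw [pderiv_pow, pderiv_X_self]
    ring
  · intro j _ hj
    rw [pderiv_pow, pderiv_X_of_ne hj, mul_zero]
  · exact fun hi => absurd (Finset.mem_univ i) hi

lemma pderiv_radSq_pow_succ (i : Fin n) (k : ℕ) :
    pderiv i (radSq n ^ (k + 1)) = (2 * (k + 1)) • (radSq n ^ k * X i) := by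
  rw [pderiv_pow, pderiv_radSq, nsmul_eq_mul, Nat.add_sub_cancel]
  push_cast
  ring

lemma lapP_radSq_pow_succ (k : ℕ) :
    lapP (radSq n ^ (k + 1)) = (2 * (k + 1) * (2 * k + n)) • radSq n ^ k := by
  have euler := (isHomogeneous_radSq (n := n)).pow k |>.sum_X_mul_pderiv
  simp only [lapP, pderiv_radSq_pow_succ, map_nsmul, pderiv_mul, pderiv_X_self,
    ← Finset.smul_sum, Finset.sum_add_distrib, Finset.sum_const, Finset.card_univ,
    Fintype.card_fin, mul_comm _ (X _), euler, one_mul, ← add_smul, smul_smul]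
  congr 1
  ring

lemma lapP_radSq_pow_succ_mul {d : ℕ} {h : MvPolynomial (Fin n) ℂ} (hhom : h.IsHomogeneous d)
    (hharm : lapP h = 0) (k : ℕ) :
    lapP (radSq n ^ (k + 1) * h) = (2 * (k + 1) * (2 * k + n + 2 * d)) • (radSq n ^ k * h) := by
  simp only [lapP_mul, lapP_radSq_pow_succ, hharm, mul_zero, add_zero, pderiv_radSq_pow_succ,
    smul_mul_assoc, mul_assoc, ← Finset.smul_sum, ← Finset.mul_sum, hhom.sum_X_mul_pderiv]
  simp only [nsmul_eq_mul]
  push_cast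
  ring

end MvPolynomial

theorem stmt_12_general (n d s p : ℕ) (h : MvPolynomial (Fin n) ℂ)
    (hhom : h.IsHomogeneous d) (hharm : lapP h = 0) :
    lapP^[p] (radSq n ^ (s + p) * h) =
      MvPolynomial.C
        ((2 ^ p * (∏ i ∈ Finset.Icc 1 p, (s + i)) *
          ∏ i ∈ Finset.range p, (2 * s + n + 2 * d + 2 * i) : ℕ) : ℂ) *
        (radSq n ^ s * h) := by
  rw [map_natCast, ← nsmul_eq_mul]
  induction p with
  | zero => simp
  | succ p ih =>
    rw [Function.iterate_succ_apply, ← add_assoc, lapP_radSq_pow_succ_mul hhom hharm,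
      iterate_lapP_nsmul, ih, smul_smul, Finset.prod_Icc_succ_top (by omega),
      Finset.prod_range_succ]
    congr 1
    ring

/-- equation `eqeigen`: for a homogeneous harmonic polynomial `h` of
degree `d`, integers `s ≥ 0` and `p ≥ 1`,
`Δ^p(|x|^{2s+2p} h) = d_p(s,d) |x|^{2s} h` with
`d_p(s,d) = 2^p (s+p)⋯(s+1) (2s+2p-2+n+2d)⋯(2s+n+2d)`. -/
theorem stmt_12 (n d s p : ℕ) (hp : 1 ≤ p) (h : MvPolynomial (Fin n) ℂ)
    (hhom : h.IsHomogeneous d) (hharm : lapP h = 0) :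
    lapP^[p] (radSq n ^ (s + p) * h) =
      MvPolynomial.C
        ((2 ^ p * (∏ i ∈ Finset.Icc 1 p, (s + i)) *
          ∏ i ∈ Finset.range p, (2 * s + n + 2 * d + 2 * i) : ℕ) : ℂ) *
        (radSq n ^ s * h) :=
  stmt_12_general n d s p h hhom hharm
end
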